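/- For every real m×n matrix M and every m×m real positive definite matrix Γ, one has tr(Mᵀ Γ⁻¹ M) + tr(Γ) ≥ 2 tr((M Mᵀ)^{1/2}). -/

import Mathlib

open Matrix

/-- Over `ℝ`, `M * Mᵀ` is positive semidefinite. -/
theorem posSemidef_self_mul_transpose {m n : ℕ} (M : Matrix (Fin m) (Fin n) ℝ) :
    (M * Mᵀ).PosSemidef := by
  simpa [Matrix.conjTranspose_eq_transpose_of_trivial] using
    Matrix.posSemidef_self_mul_conjTranspose M

open scoped ComplexOrder in
/-- The positive semidefinite square root of a positive semidefinite matrix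
(the definition `Matrix.PosSemidef.sqrt` of the older Mathlib, since removed). -/
noncomputable def Matrix.PosSemidef.sqrt {n : Type*} [Fintype n] [DecidableEq n] {𝕜 : Type*}
    [RCLike 𝕜] {A : Matrix n n 𝕜} (hA : A.PosSemidef) : Matrix n n 𝕜 :=
  (hA.1.eigenvectorUnitary : Matrix n n 𝕜) * diagonal ((↑) ∘ (√·) ∘ hA.1.eigenvalues) *
    (star (hA.1.eigenvectorUnitary : Matrix n n 𝕜))

/-!
Put `S = (M Mᵀ)^{1/2}` and expand the nonnegative trace
`tr ((S - Γ)ᵀ Γ⁻¹ (S - Γ)) = tr (Sᵀ Γ⁻¹ S) - 2 tr S + tr Γ`. Since `S` is symmetric with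
`S S = M Mᵀ`, cyclicity of the trace turns `tr (S Γ⁻¹ S)` into `tr (Mᵀ Γ⁻¹ M)`.
-/

namespace Matrix

namespace PosSemidef

open scoped ComplexOrder

variable {n 𝕜 : Type*} [Fintype n] [DecidableEq n] [RCLike 𝕜] {A : Matrix n n 𝕜}

theorem sqrt_posSemidef (hA : A.PosSemidef) : hA.sqrt.PosSemidef :=
  (posSemidef_diagonal_iff.mpr fun _ => RCLike.ofReal_nonneg.mpr (Real.sqrt_nonneg _))
    |>.mul_mul_conjTranspose_same _

theorem sqrt_mul_self (hA : A.PosSemidef) : hA.sqrt * hA.sqrt = A := by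
  set U : Matrix n n 𝕜 := (hA.1.eigenvectorUnitary : Matrix n n 𝕜)
  have hU : star U * U = 1 := Unitary.star_mul_self_of_mem hA.1.eigenvectorUnitary.2
  have hD : diagonal ((↑) ∘ (√·) ∘ hA.1.eigenvalues : n → 𝕜) *
      diagonal ((↑) ∘ (√·) ∘ hA.1.eigenvalues) = diagonal ((↑) ∘ hA.1.eigenvalues) := by
    rw [diagonal_mul_diagonal]
    congr 1 with i
    simp [← RCLike.ofReal_mul, Real.mul_self_sqrt (hA.eigenvalues_nonneg i)]
  calc hA.sqrt * hA.sqrt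
      = U * (diagonal ((↑) ∘ (√·) ∘ hA.1.eigenvalues) * (star U * U) *
          diagonal ((↑) ∘ (√·) ∘ hA.1.eigenvalues)) * star U := by
        simp only [sqrt, U, Matrix.mul_assoc]
    _ = A := by
        rw [hU, Matrix.mul_one, hD, ← Unitary.conjStarAlgAut_apply (S := 𝕜),
          ← hA.1.spectral_theorem]

end PosSemidef

variable {n : Type*} [Fintype n]

theorem two_mul_trace_le_trace_transpose_mul_inv_mul_add_trace [DecidableEq n]
    (S : Matrix n n ℝ) {Γ : Matrix n n ℝ} (hΓ : Γ.PosDef) :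
    2 * S.trace ≤ (Sᵀ * Γ⁻¹ * S).trace + Γ.trace := by
  have hΓsymm : Γᵀ = Γ := (isHermitian_iff_isSymm.mp hΓ.1).eq
  have hunit : IsUnit Γ.det := hΓ.det_pos.ne'.isUnit
  have hsq : 0 ≤ ((S - Γ)ᵀ * Γ⁻¹ * (S - Γ)).trace := by
    simpa [conjTranspose_eq_transpose_of_trivial, Matrix.mul_assoc] using
      (hΓ.inv.posSemidef.conjTranspose_mul_mul_same (S - Γ)).trace_nonneg
  have hexpand : ((S - Γ)ᵀ * Γ⁻¹ * (S - Γ)).trace =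
      (Sᵀ * Γ⁻¹ * S).trace - 2 * S.trace + Γ.trace := by
    simp only [transpose_sub, hΓsymm, Matrix.sub_mul, Matrix.mul_sub, trace_sub,
      Matrix.mul_assoc, nonsing_inv_mul Γ hunit, Matrix.mul_one]
    rw [← Matrix.mul_assoc Γ, mul_nonsing_inv Γ hunit, Matrix.one_mul, trace_transpose]
    ring
  linarith

theorem trace_transpose_mul_mul_eq_of_mul_transpose_eq {k l : Type*} [Fintype k] [Fintype l]
    {S : Matrix n k ℝ} {M : Matrix n l ℝ} (h : S * Sᵀ = M * Mᵀ) (A : Matrix n n ℝ) : (Sᵀ * A * S).trace = (Mᵀ * A * M).trace := by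
  rw [trace_mul_cycle, h, ← trace_mul_cycle]

end Matrix

/-- Lower-bound half of Lemma 1 (variational formulation of the trace norm): for every real
`m × n` matrix `M` and every `m × m` real positive definite matrix `Γ`,
`tr (Mᵀ Γ⁻¹ M) + tr Γ ≥ 2 tr ((M Mᵀ) ^ (1/2))`, where `(M Mᵀ) ^ (1/2)` is the unique
positive semidefinite square root of `M Mᵀ`, so that `tr ((M Mᵀ) ^ (1/2)) = ‖M‖₊` is
the trace norm of `M`. -/
theorem trace_transpose_inv_mul_add_trace_ge_two_traceNorm
    {m n : ℕ} (M : Matrix (Fin m) (Fin n) ℝ) (Γ : Matrix (Fin m) (Fin m) ℝ)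
    (hΓ : Γ.PosDef) :
    (Mᵀ * Γ⁻¹ * M).trace + Γ.trace ≥ 2 * (posSemidef_self_mul_transpose M).sqrt.trace := by
  set hMM := posSemidef_self_mul_transpose M
  have hsymm : hMM.sqrtᵀ = hMM.sqrt := (isHermitian_iff_isSymm.mp hMM.sqrt_posSemidef.1).eq
  have hsq : hMM.sqrt * hMM.sqrtᵀ = M * Mᵀ := by rw [hsymm, hMM.sqrt_mul_self]
  calc 2 * hMM.sqrt.trace ≤ (hMM.sqrtᵀ * Γ⁻¹ * hMM.sqrt).trace + Γ.trace :=
        two_mul_trace_le_trace_transpose_mul_inv_mul_add_trace _ hΓ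
    _ = (Mᵀ * Γ⁻¹ * M).trace + Γ.trace := by
        rw [trace_transpose_mul_mul_eq_of_mul_transpose_eq hsq]
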